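/- arXiv:2201.11419 — 2 statements merged into one kernel-verified Lean document; each statement's English description precedes it below -/
import Mathlib

section
/- Let d ∈ {4, 6} and R₀ > 0. Then there exists a constant C > 0 such that for all R ≥ R₀ and all f ∈ C²([0,R], ℝ): ∫₀^R |f(r)|² r^{d−3} dr ≤ C ∫₀^R (|f(r)|² + |f′(r)|²) r^{d−1} dr, and ∫₀^R |f′(r)|² r^{d−3} dr ≤ C ( ∫₀^R (|f(r)|² + |f′(r)|²) r^{d−1} dr + ∫₀^R |f″(r) + (d−1) f′(r)/r|² r^{d−1} dr ). -/
/-!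
Write `d = n + 3`. Both inequalities come from integrating an exact derivative against a power
weight. For the first, `(f² r^{n+1} (1 - r/R))'` integrates to zero over `(0, R)`, and pointwise it
dominates `(n/2) f² rⁿ - M (f² + f'²) r^{n+2}` as soon as `M ≥ 1` and `2 n M R² ≥ (n+1)²`
(a discriminant condition), which holds uniformly in `R ≥ R₀` for `M = 1 + (n+1)²/R₀²`.
For the second, with `g = f'` there is the exact identity
`(g' + (n+2) g/r)² r^{n+2} = (n+2) g² rⁿ + (g² r^{n+1})' + (g' r + (n+1) g)² rⁿ`,
and the boundary term `g(R)² R^{n+1}` is nonnegative.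
-/

open MeasureTheory Set

lemma setIntegral_Ioo_eq_sub_of_hasDerivAt {E : Type*} [NormedAddCommGroup E] [NormedSpace ℝ E]
    [CompleteSpace E] {F F' : ℝ → E} {a b : ℝ} (hab : a ≤ b)
    (hF : ContinuousOn F (Icc a b)) (hderiv : ∀ x ∈ Ioo a b, HasDerivAt F (F' x) x)
    (hint : IntegrableOn F' (Ioo a b)) :
    ∫ x in Ioo a b, F' x = F b - F a := by
  rw [← integral_Ioc_eq_integral_Ioo, ← intervalIntegral.integral_of_le hab]
  exact intervalIntegral.integral_eq_sub_of_hasDerivAt_of_le hab hF hderiv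
    ((intervalIntegrable_iff_integrableOn_Ioo_of_le hab).2 hint)

lemma ContinuousOn.integrableOn_Ioo_of_Icc {E : Type*} [NormedAddCommGroup E] {φ : ℝ → E}
    {a b : ℝ} (hφ : ContinuousOn φ (Icc a b)) :
    IntegrableOn φ (Ioo a b) :=
  hφ.integrableOn_Icc.mono_set Ioo_subset_Icc_self

lemma hasDerivAt_derivWithin_Icc {E : Type*} [NormedAddCommGroup E] [NormedSpace ℝ E]
    {f : ℝ → E} {a b x : ℝ} (hf : DifferentiableOn ℝ f (Icc a b)) (hx : x ∈ Ioo a b) :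
    HasDerivAt f (derivWithin f (Icc a b) x) x :=
  (hf x (Ioo_subset_Icc_self hx)).hasDerivWithinAt.hasDerivAt (Icc_mem_nhds hx.1 hx.2)

lemma half_mul_sq_le_cutoff_integrand {n F G r R M : ℝ} (hr : 0 < r) (hrR : r ≤ R) (hM : 1 ≤ M)
    (hMR : (n + 1) ^ 2 ≤ 2 * n * M * R ^ 2) :
    n / 2 * F ^ 2 ≤
      2 * F * G * r * (1 - r / R) + F ^ 2 * ((n + 1) - (n + 2) * (r / R)) +
        M * (F ^ 2 + G ^ 2) * r ^ 2 := by
  have hR : 0 < R := hr.trans_le hrR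
  set s := r / R with hs
  have hrs : r = s * R := by rw [hs, div_mul_cancel₀ _ hR.ne']
  have hs1 : s ≤ 1 := (div_le_one hR).2 hrR
  have hquad : 0 ≤ n / 2 - (n + 1) * s + M * r ^ 2 := by
    have hMR0 : 0 < M * R ^ 2 := by positivity
    have : 0 ≤ 4 * (M * R ^ 2) * (n / 2 - (n + 1) * s + M * r ^ 2) := by
      rw [hrs]; nlinarith [sq_nonneg (2 * (M * R ^ 2) * s - (n + 1))]
    exact (mul_nonneg_iff_of_pos_left (by positivity)).1 this
  have hs0 : 0 ≤ s := by positivity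
  rw [← sub_nonneg]
  calc (0 : ℝ) ≤ (1 - s) * (F + G * r) ^ 2 + F ^ 2 * (n / 2 - (n + 1) * s + M * r ^ 2)
        + (M - 1 + s) * (G * r) ^ 2 := by
        have := mul_nonneg (sq_nonneg F) hquad
        have := mul_nonneg (by linarith : 0 ≤ M - 1 + s) (sq_nonneg (G * r))
        have := mul_nonneg (sub_nonneg.2 hs1) (sq_nonneg (F + G * r))
        linarith
    _ = _ := by ring

lemma half_mul_integral_sq_mul_pow_le (n : ℕ) {f g : ℝ → ℝ} {R M : ℝ} (hR : 0 < R) (hM : 1 ≤ M)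
    (hMR : ((n : ℝ) + 1) ^ 2 ≤ 2 * n * M * R ^ 2)
    (hf : ContinuousOn f (Icc 0 R)) (hg : ContinuousOn g (Icc 0 R))
    (hfg : ∀ r ∈ Ioo 0 R, HasDerivAt f (g r) r) :
    (n : ℝ) / 2 * ∫ r in Ioo 0 R, f r ^ 2 * r ^ n ≤
      M * ∫ r in Ioo 0 R, (f r ^ 2 + g r ^ 2) * r ^ (n + 2) := by
  set A : ℝ → ℝ := fun r =>
    (2 * f r * g r * r * (1 - r / R) + f r ^ 2 * ((n + 1) - (n + 2) * (r / R))) * r ^ n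
  have hAc : ContinuousOn A (Icc 0 R) := by fun_prop
  have hA : ∫ r in Ioo 0 R, A r = 0 := by
    have hderiv : ∀ r ∈ Ioo 0 R,
        HasDerivAt (fun r => f r ^ 2 * (r ^ (n + 1) * (1 - r / R))) (A r) r :=
      fun r hr => (((hfg r hr).fun_pow 2).fun_mul ((hasDerivAt_pow (n + 1) r).fun_mul
        (((hasDerivAt_id r).div_const R).const_sub 1))).congr_deriv
        (by simp only [A, id]; push_cast; ring)
    rw [setIntegral_Ioo_eq_sub_of_hasDerivAt hR.le (by fun_prop) hderiv hAc.integrableOn_Ioo_of_Icc]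
    simp [hR.ne']
  have hI : IntegrableOn (fun r => (f r ^ 2 + g r ^ 2) * r ^ (n + 2)) (Ioo 0 R) :=
    ContinuousOn.integrableOn_Ioo_of_Icc (by fun_prop)
  calc (n : ℝ) / 2 * ∫ r in Ioo 0 R, f r ^ 2 * r ^ n
      = ∫ r in Ioo 0 R, (n : ℝ) / 2 * (f r ^ 2 * r ^ n) := (integral_const_mul _ _).symm
    _ ≤ ∫ r in Ioo 0 R, (A r + M * ((f r ^ 2 + g r ^ 2) * r ^ (n + 2))) := by
      refine setIntegral_mono_on (ContinuousOn.integrableOn_Ioo_of_Icc (by fun_prop))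
        (hAc.integrableOn_Ioo_of_Icc.add (hI.const_mul M)) measurableSet_Ioo fun r hr => ?_
      have := mul_le_mul_of_nonneg_right
        (half_mul_sq_le_cutoff_integrand (F := f r) (G := g r) hr.1 hr.2.le hM hMR)
        (pow_nonneg hr.1.le n)
      convert this using 1 <;> ring
    _ = M * ∫ r in Ioo 0 R, (f r ^ 2 + g r ^ 2) * r ^ (n + 2) := by
      rw [integral_add hAc.integrableOn_Ioo_of_Icc (hI.const_mul M), hA, integral_const_mul,
        zero_add]

lemma add_two_mul_integral_sq_mul_pow_le (n : ℕ) {g g' : ℝ → ℝ} {R : ℝ} (hR : 0 ≤ R)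
    (hg : ContinuousOn g (Icc 0 R)) (hg' : ContinuousOn g' (Icc 0 R))
    (hgg' : ∀ r ∈ Ioo 0 R, HasDerivAt g (g' r) r) :
    ((n : ℝ) + 2) * ∫ r in Ioo 0 R, g r ^ 2 * r ^ n ≤
      ∫ r in Ioo 0 R, (g' r + (n + 2) * g r / r) ^ 2 * r ^ (n + 2) := by
  set B : ℝ → ℝ := fun r => (2 * g r * g' r * r + (n + 1) * g r ^ 2) * r ^ n
  have hBc : ContinuousOn B (Icc 0 R) := by fun_prop
  have hB : 0 ≤ ∫ r in Ioo 0 R, B r := by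
    have hderiv : ∀ r ∈ Ioo 0 R, HasDerivAt (fun r => g r ^ 2 * r ^ (n + 1)) (B r) r :=
      fun r hr => (((hgg' r hr).fun_pow 2).fun_mul (hasDerivAt_pow (n + 1) r)).congr_deriv
        (by simp only [B]; push_cast; ring)
    rw [setIntegral_Ioo_eq_sub_of_hasDerivAt hR (by fun_prop) hderiv hBc.integrableOn_Ioo_of_Icc]
    simp only [zero_pow n.succ_ne_zero, mul_zero, sub_zero]
    positivity
  set S : ℝ → ℝ := fun r => (g' r * r + (n + 1) * g r) ^ 2 * r ^ n
  have hS : 0 ≤ ∫ r in Ioo 0 R, S r :=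
    setIntegral_nonneg measurableSet_Ioo fun r hr => by have := hr.1; positivity
  have hG : IntegrableOn (fun r => ((n : ℝ) + 2) * (g r ^ 2 * r ^ n)) (Ioo 0 R) :=
    ContinuousOn.integrableOn_Ioo_of_Icc (by fun_prop)
  calc ((n : ℝ) + 2) * ∫ r in Ioo 0 R, g r ^ 2 * r ^ n
      ≤ ((n : ℝ) + 2) * (∫ r in Ioo 0 R, g r ^ 2 * r ^ n) + (∫ r in Ioo 0 R, B r)
          + ∫ r in Ioo 0 R, S r := by linarith
    _ = ∫ r in Ioo 0 R, (((n : ℝ) + 2) * (g r ^ 2 * r ^ n) + B r + S r) := by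
      rw [integral_add (hG.fun_add hBc.integrableOn_Ioo_of_Icc)
        (ContinuousOn.integrableOn_Ioo_of_Icc (by fun_prop)),
        integral_add hG hBc.integrableOn_Ioo_of_Icc, integral_const_mul]
    _ = ∫ r in Ioo 0 R, (g' r + (n + 2) * g r / r) ^ 2 * r ^ (n + 2) := by
      refine setIntegral_congr_fun measurableSet_Ioo fun r hr => ?_
      simp only [B, S]
      field_simp [hr.1.ne']
      ring

theorem radial_hardy (n : ℕ) {f : ℝ → ℝ} {R M : ℝ} (hR : 0 < R) (hM : 1 ≤ M)
    (hMR : ((n : ℝ) + 1) ^ 2 ≤ 2 * n * M * R ^ 2) (hf : ContDiffOn ℝ 2 f (Icc 0 R)) :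
    (n : ℝ) / 2 * ∫ r in Ioo 0 R, f r ^ 2 * r ^ n ≤
        M * ∫ r in Ioo 0 R, (f r ^ 2 + deriv f r ^ 2) * r ^ (n + 2) ∧
      ((n : ℝ) + 2) * ∫ r in Ioo 0 R, deriv f r ^ 2 * r ^ n ≤
        ∫ r in Ioo 0 R, (deriv (deriv f) r + (n + 2) * deriv f r / r) ^ 2 * r ^ (n + 2) := by
  set g := derivWithin f (Icc 0 R)
  have hg : ContDiffOn ℝ 1 g (Icc 0 R) := hf.derivWithin (uniqueDiffOn_Icc hR) (by norm_num)
  have hfg : ∀ r ∈ Ioo 0 R, HasDerivAt f (g r) r :=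
    fun r => hasDerivAt_derivWithin_Icc (hf.differentiableOn (by norm_num))
  have hgg' : ∀ r ∈ Ioo 0 R, HasDerivAt g (derivWithin g (Icc 0 R) r) r :=
    fun r => hasDerivAt_derivWithin_Icc (hg.differentiableOn (by norm_num))
  have hderiv : EqOn (deriv f) g (Ioo 0 R) := fun r hr => (hfg r hr).deriv
  have hderiv2 : EqOn (deriv (deriv f)) (derivWithin g (Icc 0 R)) (Ioo 0 R) := fun r hr => by
    rw [(hderiv.eventuallyEq_of_mem (Ioo_mem_nhds hr.1 hr.2)).deriv_eq, (hgg' r hr).deriv]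
  have hI : ∫ r in Ioo 0 R, (f r ^ 2 + deriv f r ^ 2) * r ^ (n + 2) =
      ∫ r in Ioo 0 R, (f r ^ 2 + g r ^ 2) * r ^ (n + 2) :=
    setIntegral_congr_fun measurableSet_Ioo fun r hr => by rw [hderiv hr]
  have hY : ∫ r in Ioo 0 R, deriv f r ^ 2 * r ^ n = ∫ r in Ioo 0 R, g r ^ 2 * r ^ n :=
    setIntegral_congr_fun measurableSet_Ioo fun r hr => by rw [hderiv hr]
  have hJ : ∫ r in Ioo 0 R, (deriv (deriv f) r + (n + 2) * deriv f r / r) ^ 2 * r ^ (n + 2) =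
      ∫ r in Ioo 0 R, (derivWithin g (Icc 0 R) r + (n + 2) * g r / r) ^ 2 * r ^ (n + 2) :=
    setIntegral_congr_fun measurableSet_Ioo fun r hr => by rw [hderiv hr, hderiv2 hr]
  rw [hI, hY, hJ]
  exact ⟨half_mul_integral_sq_mul_pow_le n hR hM hMR hf.continuousOn hg.continuousOn hfg,
    add_two_mul_integral_sq_mul_pow_le n hR.le hg.continuousOn
      (hg.continuousOn_derivWithin (uniqueDiffOn_Icc hR) le_rfl) hgg'⟩

theorem radial_hardy_uniform (n : ℕ) (hn : 1 ≤ n) {R₀ R : ℝ} (hR₀ : 0 < R₀) (hR : R₀ ≤ R)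
    {f : ℝ → ℝ} (hf : ContDiffOn ℝ 2 f (Icc 0 R)) :
    ∫ r in Ioo 0 R, f r ^ 2 * r ^ n ≤ 2 * (1 + ((n : ℝ) + 1) ^ 2 / R₀ ^ 2) *
        ∫ r in Ioo 0 R, (f r ^ 2 + deriv f r ^ 2) * r ^ (n + 2) ∧
      ∫ r in Ioo 0 R, deriv f r ^ 2 * r ^ n ≤ 2 * (1 + ((n : ℝ) + 1) ^ 2 / R₀ ^ 2) *
        ((∫ r in Ioo 0 R, (f r ^ 2 + deriv f r ^ 2) * r ^ (n + 2)) +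
          ∫ r in Ioo 0 R, (deriv (deriv f) r + (n + 2) * deriv f r / r) ^ 2 * r ^ (n + 2)) := by
  set M : ℝ := 1 + ((n : ℝ) + 1) ^ 2 / R₀ ^ 2
  have hM : 1 ≤ M := le_add_of_nonneg_right (by positivity)
  have hn' : (1 : ℝ) ≤ n := by exact_mod_cast hn
  have hMR : ((n : ℝ) + 1) ^ 2 ≤ 2 * n * M * R ^ 2 := by
    have hR₀M : ((n : ℝ) + 1) ^ 2 ≤ M * R₀ ^ 2 := by
      rw [← div_le_iff₀ (by positivity)]; exact le_add_of_nonneg_left zero_le_one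
    have : M * R₀ ^ 2 ≤ M * R ^ 2 := by gcongr
    nlinarith
  obtain ⟨h₁, h₂⟩ := radial_hardy n (hR₀.trans_le hR) hM hMR hf
  have hX : 0 ≤ ∫ r in Ioo 0 R, f r ^ 2 * r ^ n :=
    setIntegral_nonneg measurableSet_Ioo fun r hr => by have := hr.1; positivity
  have hY : 0 ≤ ∫ r in Ioo 0 R, deriv f r ^ 2 * r ^ n :=
    setIntegral_nonneg measurableSet_Ioo fun r hr => by have := hr.1; positivity
  have hI : 0 ≤ ∫ r in Ioo 0 R, (f r ^ 2 + deriv f r ^ 2) * r ^ (n + 2) :=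
    setIntegral_nonneg measurableSet_Ioo fun r hr => by have := hr.1; positivity
  have hJ : 0 ≤ ∫ r in Ioo 0 R,
      (deriv (deriv f) r + (n + 2) * deriv f r / r) ^ 2 * r ^ (n + 2) :=
    setIntegral_nonneg measurableSet_Ioo fun r hr => by have := hr.1; positivity
  constructor <;> nlinarith

/-- Radial Hardy inequalities in dimensions `d ∈ {4,6}`, uniform over `R ≥ R₀`:
`∫₀^R |f|² r^{d−3} dr ≲ ∫₀^R (|f|²+|f′|²) r^{d−1} dr` and
`∫₀^R |f′|² r^{d−3} dr ≲ ∫₀^R (|f|²+|f′|²) r^{d−1} dr + ∫₀^R |f″+(d−1)f′/r|² r^{d−1} dr`. -/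
theorem radial_hardy_dims (d : ℕ) (hd : d = 4 ∨ d = 6) (R₀ : ℝ) (hR₀ : 0 < R₀) :
    ∃ C > (0:ℝ), ∀ R ≥ R₀, ∀ f : ℝ → ℝ, ContDiffOn ℝ 2 f (Set.Icc 0 R) →
      ((∫ r in Set.Ioo 0 R, |f r| ^ 2 * r ^ (d - 3)) ≤
        C * ∫ r in Set.Ioo 0 R, (|f r| ^ 2 + |deriv f r| ^ 2) * r ^ (d - 1))
      ∧ ((∫ r in Set.Ioo 0 R, |deriv f r| ^ 2 * r ^ (d - 3)) ≤
        C * ((∫ r in Set.Ioo 0 R, (|f r| ^ 2 + |deriv f r| ^ 2) * r ^ (d - 1))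
          + ∫ r in Set.Ioo 0 R,
              |deriv (deriv f) r + (d - 1 : ℝ) * deriv f r / r| ^ 2 * r ^ (d - 1))) := by
  obtain ⟨n, hn, rfl⟩ : ∃ n : ℕ, 1 ≤ n ∧ d = n + 3 := by
    rcases hd with rfl | rfl
    exacts [⟨1, le_rfl, rfl⟩, ⟨3, by norm_num, rfl⟩]
  refine ⟨2 * (1 + ((n : ℝ) + 1) ^ 2 / R₀ ^ 2), by positivity, fun R hR f hf => ?_⟩
  simp only [sq_abs, Nat.add_sub_cancel, show n + 3 - 1 = n + 2 from rfl]
  push_cast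
  rw [show (n : ℝ) + 3 - 1 = n + 2 by ring]
  exact radial_hardy_uniform n hn hR₀ hR hf
end

section
/- Define n : (0,1) × ℝ → ℝ by n(ρ,x) := −(3 sin(4 arctan(ρ/√2) + 2ρx) − 6ρx)/(2ρ³) + 3 sin(4 arctan(ρ/√2))/(2ρ³) − 48x/(ρ²+2)². Then there exists a constant C > 0 such that for all ρ ∈ (0,1) and all x ∈ ℝ: |n(ρ,x)| ≤ C(x² + |x|³), |∂_x n(ρ,x)| ≤ C(|x| + x²), |∂_ρ n(ρ,x)| ≤ C(x² + x⁴), |∂_x ∂_ρ n(ρ,x)| ≤ C(|x| + |x|³), and |∂_x² n(ρ,x)| ≤ C(1 + |x|). -/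
/-!
With `A = 4 arctan (ρ/√2)` and `u = ρ x`,
`sin (A + 2u) - sin A - 2u = sin A (cos 2u - 1) + cos A (sin 2u - 2u) + (cos A - 1) 2u`,
and the last term cancels `-48x/(ρ²+2)²`. Hence
`n(ρ,x) = -3/2 (sinCoeff ρ · cosTail u / ρ² + cosCoeff ρ · sinTail u / ρ³)`, where
`sinCoeff = sin A / ρ` and `cosCoeff = cos A` are rational functions of `ρ`, bounded on `ℝ`
together with their derivatives.
Every partial derivative appearing in the bounds is again a combination of terms `h(ρx)/ρᵏ`
with `|h(u)| ≤ c|u|ᵏ`, and such a term is at most `c|x|ᵏ` whatever `ρ` is. The estimates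
`|h(u)| ≤ c|u|ᵏ` follow from `h(0) = 0` and the mean value inequality, climbing from
`|sin|, |cos| ≤ 1` one power of `u` at a time.
-/

noncomputable section

/-- The nonlinearity of the corotational wave maps equation in similarity coordinates,
linearized around the blowup profile:
`n(ρ,x) = −(3 sin(4 arctan(ρ/√2) + 2ρx) − 6ρx)/(2ρ³) + 3 sin(4 arctan(ρ/√2))/(2ρ³)
          − 48x/(ρ²+2)²`. -/
def nlin (ρ x : ℝ) : ℝ :=
  -(3 * Real.sin (4 * Real.arctan (ρ / Real.sqrt 2) + 2 * ρ * x) - 6 * ρ * x) / (2 * ρ ^ 3)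
    + 3 * Real.sin (4 * Real.arctan (ρ / Real.sqrt 2)) / (2 * ρ ^ 3)
    - 48 * x / (ρ ^ 2 + 2) ^ 2

open Real Set

theorem abs_le_mul_abs_pow_succ_of_hasDerivAt {f f' : ℝ → ℝ} {c : ℝ} {m : ℕ}
    (hf : ∀ t, HasDerivAt f (f' t) t) (hf₀ : f 0 = 0) (hf' : ∀ t, |f' t| ≤ c * |t| ^ m)
    (u : ℝ) : |f u| ≤ c * |u| ^ (m + 1) := by
  have hc : 0 ≤ c := by simpa using (abs_nonneg _).trans (hf' 1)
  have hmem : ∀ {t}, t ∈ Icc (-|u|) |u| ↔ |t| ≤ |u| := abs_le.symm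
  have := (convex_Icc (-|u|) |u|).norm_image_sub_le_of_norm_hasDerivWithin_le
    (C := c * |u| ^ m) (x := 0) (y := u) (fun t _ => (hf t).hasDerivWithinAt)
    (fun t ht => (hf' t).trans <|
      mul_le_mul_of_nonneg_left (pow_le_pow_left₀ (abs_nonneg t) (hmem.1 ht) m) hc)
    (hmem.2 (by simp)) (hmem.2 le_rfl)
  simpa [hf₀, pow_succ, mul_assoc] using this

theorem hasDerivAt_comp_mul_const_div_pow {g : ℝ → ℝ} {d ρ x : ℝ}
    (hg : HasDerivAt g d (ρ * x)) (hρ : ρ ≠ 0) (k : ℕ) :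
    HasDerivAt (fun s => g (s * x) / s ^ k) ((ρ * x * d - k * g (ρ * x)) / ρ ^ (k + 1)) ρ := by
  refine ((hg.comp ρ (hasDerivAt_mul_const x)).div (hasDerivAt_pow k ρ)
    (pow_ne_zero k hρ)).congr_deriv ?_
  simp only [Function.comp_apply]
  rcases k with _ | k
  · push_cast
    field_simp
    ring
  · rw [Nat.add_sub_cancel]
    field_simp
    push_cast
    ring

theorem hasDerivAt_comp_const_mul_div_pow_succ {g : ℝ → ℝ} {d ρ x : ℝ}
    (hg : HasDerivAt g d (ρ * x)) (hρ : ρ ≠ 0) (k : ℕ) :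
    HasDerivAt (fun y => g (ρ * y) / ρ ^ (k + 1)) (d / ρ ^ k) x := by
  refine ((hg.comp x (hasDerivAt_const_mul ρ)).div_const (ρ ^ (k + 1))).congr_deriv ?_
  rw [pow_succ]
  field_simp

theorem abs_div_pow_le_of_abs_le {y a ρ x : ℝ} {k : ℕ} (hy : |y| ≤ a * |ρ * x| ^ k)
    (hρ : ρ ≠ 0) : |y / ρ ^ k| ≤ a * |x| ^ k := by
  have hρk : 0 < |ρ| ^ k := by positivity
  rw [abs_div, abs_pow, div_le_iff₀ hρk]
  calc |y| ≤ a * |ρ * x| ^ k := hy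
    _ = a * |x| ^ k * |ρ| ^ k := by rw [abs_mul]; ring

theorem abs_mul_add_mul_le {a b c d A B C D : ℝ} (ha : |a| ≤ A) (hb : |b| ≤ B)
    (hc : |c| ≤ C) (hd : |d| ≤ D) : |a * b + c * d| ≤ A * B + C * D :=
  calc |a * b + c * d| ≤ |a| * |b| + |c| * |d| := by
        simpa only [abs_mul] using abs_add_le (a * b) (c * d)
    _ ≤ A * B + C * D := add_le_add (mul_le_mul ha hb (abs_nonneg b) ((abs_nonneg a).trans ha))
        (mul_le_mul hc hd (abs_nonneg d) ((abs_nonneg c).trans hc))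

namespace Real

theorem sin_two_mul_arctan (t : ℝ) : sin (2 * arctan t) = 2 * t / (1 + t ^ 2) := by
  rw [sin_two_mul, ← tan_mul_cos (cos_arctan_pos t).ne', tan_arctan,
    show 2 * (t * cos (arctan t)) * cos (arctan t) = 2 * t * cos (arctan t) ^ 2 by ring,
    cos_sq_arctan]
  field_simp

theorem cos_two_mul_arctan (t : ℝ) : cos (2 * arctan t) = (1 - t ^ 2) / (1 + t ^ 2) := by
  rw [cos_two_mul, cos_sq_arctan]
  field_simp
  ring

theorem sin_four_mul_arctan (t : ℝ) :
    sin (4 * arctan t) = 4 * t * (1 - t ^ 2) / (1 + t ^ 2) ^ 2 := by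
  rw [show 4 * arctan t = 2 * (2 * arctan t) by ring, sin_two_mul, sin_two_mul_arctan,
    cos_two_mul_arctan]
  field_simp
  ring

theorem cos_four_mul_arctan (t : ℝ) :
    cos (4 * arctan t) = 1 - 8 * t ^ 2 / (1 + t ^ 2) ^ 2 := by
  rw [show 4 * arctan t = 2 * (2 * arctan t) by ring, cos_two_mul_eq_one_sub,
    sin_two_mul_arctan]
  field_simp
  ring

end Real

def sinCoeff (ρ : ℝ) : ℝ := 4 * √2 * (2 - ρ ^ 2) / (ρ ^ 2 + 2) ^ 2

def cosCoeff (ρ : ℝ) : ℝ := 1 - 16 * ρ ^ 2 / (ρ ^ 2 + 2) ^ 2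

theorem sin_four_mul_arctan_div_sqrt_two (ρ : ℝ) :
    sin (4 * arctan (ρ / √2)) = ρ * sinCoeff ρ := by
  have h2 : √2 ^ 2 = 2 := sq_sqrt zero_le_two
  rw [sin_four_mul_arctan, sinCoeff, div_pow, h2]
  field_simp
  rw [h2]
  ring

theorem cos_four_mul_arctan_div_sqrt_two (ρ : ℝ) :
    cos (4 * arctan (ρ / √2)) = cosCoeff ρ := by
  rw [cos_four_mul_arctan, cosCoeff, div_pow, sq_sqrt zero_le_two]
  field_simp
  ring

theorem hasDerivAt_sinCoeff (ρ : ℝ) :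
    HasDerivAt sinCoeff (4 * √2 * ρ * (2 * ρ ^ 2 - 12) / (ρ ^ 2 + 2) ^ 3) ρ := by
  have hsq : HasDerivAt (fun s : ℝ => s ^ 2 + 2) (2 * ρ) ρ := by
    simpa using (hasDerivAt_pow 2 ρ).add_const 2
  have hpos : (ρ ^ 2 + 2) ^ 2 ≠ 0 := by positivity
  refine ((((hasDerivAt_pow 2 ρ).const_sub 2).const_mul (4 * √2)).fun_div (hsq.fun_pow 2)
    hpos).congr_deriv ?_
  field_simp
  ring

theorem hasDerivAt_cosCoeff (ρ : ℝ) :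
    HasDerivAt cosCoeff (32 * ρ * (ρ ^ 2 - 2) / (ρ ^ 2 + 2) ^ 3) ρ := by
  have hsq : HasDerivAt (fun s : ℝ => s ^ 2 + 2) (2 * ρ) ρ := by
    simpa using (hasDerivAt_pow 2 ρ).add_const 2
  have hpos : (ρ ^ 2 + 2) ^ 2 ≠ 0 := by positivity
  refine ((((hasDerivAt_pow 2 ρ).const_mul 16).fun_div (hsq.fun_pow 2)
    hpos).const_sub 1).congr_deriv ?_
  field_simp
  ring

theorem sqrt_two_le_three_halves : √2 ≤ 3 / 2 := by
  rw [sqrt_le_left (by norm_num)]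
  norm_num

theorem abs_sinCoeff_le (ρ : ℝ) : |sinCoeff ρ| ≤ 3 := by
  have hb : 0 < (ρ ^ 2 + 2) ^ 2 := by positivity
  rw [sinCoeff, abs_div, abs_of_pos hb, div_le_iff₀ hb, abs_le]
  constructor <;>
    nlinarith [sq_nonneg ρ, sqrt_nonneg 2, sqrt_two_le_three_halves,
      mul_nonneg (sqrt_nonneg 2) (sq_nonneg ρ)]

theorem abs_cosCoeff_le (ρ : ℝ) : |cosCoeff ρ| ≤ 1 := by
  have hb : 0 < (ρ ^ 2 + 2) ^ 2 := by positivity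
  have hle : 16 * ρ ^ 2 / (ρ ^ 2 + 2) ^ 2 ≤ 2 := by
    rw [div_le_iff₀ hb]
    nlinarith [sq_nonneg (ρ ^ 2 - 2)]
  have hnonneg : 0 ≤ 16 * ρ ^ 2 / (ρ ^ 2 + 2) ^ 2 := by positivity
  rw [cosCoeff, abs_le]
  constructor <;> linarith

theorem abs_deriv_sinCoeff_le (ρ : ℝ) : |deriv sinCoeff ρ| ≤ 9 := by
  have hX : 2 ≤ ρ ^ 2 + 2 := by nlinarith [sq_nonneg ρ]
  have hb : 0 < (ρ ^ 2 + 2) ^ 3 := by positivity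
  rw [(hasDerivAt_sinCoeff ρ).deriv, abs_div, abs_of_pos hb, div_le_iff₀ hb]
  calc |4 * √2 * ρ * (2 * ρ ^ 2 - 12)| = 4 * √2 * |ρ| * |2 * ρ ^ 2 - 12| := by
        simp [abs_mul]
    _ ≤ 4 * (3 / 2) * ((ρ ^ 2 + 2) / 2) * (6 * (ρ ^ 2 + 2)) := by
        gcongr
        · exact sqrt_two_le_three_halves
        · nlinarith [sq_abs ρ, sq_nonneg (|ρ| - 1)]
        · exact abs_le.2 ⟨by nlinarith, by nlinarith⟩
    _ ≤ 9 * (ρ ^ 2 + 2) ^ 3 := by nlinarith [sq_nonneg (ρ ^ 2 + 2)]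

theorem abs_deriv_cosCoeff_le (ρ : ℝ) : |deriv cosCoeff ρ| ≤ 8 := by
  have hX : 2 ≤ ρ ^ 2 + 2 := by nlinarith [sq_nonneg ρ]
  have hb : 0 < (ρ ^ 2 + 2) ^ 3 := by positivity
  rw [(hasDerivAt_cosCoeff ρ).deriv, abs_div, abs_of_pos hb, div_le_iff₀ hb]
  calc |32 * ρ * (ρ ^ 2 - 2)| = 32 * |ρ| * |ρ ^ 2 - 2| := by simp [abs_mul]
    _ ≤ 32 * ((ρ ^ 2 + 2) / 2) * (ρ ^ 2 + 2) := by
        gcongr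
        · nlinarith [sq_abs ρ, sq_nonneg (|ρ| - 1)]
        · exact abs_le.2 ⟨by nlinarith, by nlinarith⟩
    _ ≤ 8 * (ρ ^ 2 + 2) ^ 3 := by nlinarith [sq_nonneg (ρ ^ 2 + 2)]

def cosTail (u : ℝ) : ℝ := cos (2 * u) - 1

def sinTail (u : ℝ) : ℝ := sin (2 * u) - 2 * u

/-- `(u d/du - 2) cosTail`: the `ρ`-derivative of `cosTail (ρ x) / ρ²` is
`cosTailEuler (ρ x) / ρ³`. -/
def cosTailEuler (u : ℝ) : ℝ := u * (-2 * sin (2 * u)) - 2 * cosTail u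

/-- `(u d/du - 3) sinTail`: the `ρ`-derivative of `sinTail (ρ x) / ρ³` is
`sinTailEuler (ρ x) / ρ⁴`. -/
def sinTailEuler (u : ℝ) : ℝ := u * (2 * cosTail u) - 3 * sinTail u

theorem hasDerivAt_cosTail (u : ℝ) : HasDerivAt cosTail (-2 * sin (2 * u)) u := by
  refine ((hasDerivAt_const_mul 2).cos.sub_const 1).congr_deriv ?_
  ring

theorem hasDerivAt_sinTail (u : ℝ) : HasDerivAt sinTail (2 * cosTail u) u := by
  refine ((hasDerivAt_const_mul 2).sin.sub (hasDerivAt_const_mul 2)).congr_deriv ?_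
  rw [cosTail]
  ring

theorem hasDerivAt_cosTailEuler (u : ℝ) :
    HasDerivAt cosTailEuler (2 * sin (2 * u) - 4 * u * cos (2 * u)) u := by
  refine (((hasDerivAt_id' u).mul ((hasDerivAt_const_mul 2).sin.const_mul (-2))).sub
    ((hasDerivAt_cosTail u).const_mul 2)).congr_deriv ?_
  ring

theorem hasDerivAt_sinTailEuler (u : ℝ) : HasDerivAt sinTailEuler (2 * cosTailEuler u) u := by
  refine (((hasDerivAt_id' u).mul ((hasDerivAt_cosTail u).const_mul 2)).sub
    ((hasDerivAt_sinTail u).const_mul 3)).congr_deriv ?_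
  rw [cosTailEuler]
  ring

theorem abs_sin_two_mul_le (u : ℝ) : |sin (2 * u)| ≤ 2 * |u| := by
  simpa [abs_mul] using abs_sin_le_abs (x := 2 * u)

theorem abs_cosTail_le (u : ℝ) : |cosTail u| ≤ 4 * |u| ^ 2 :=
  abs_le_mul_abs_pow_succ_of_hasDerivAt hasDerivAt_cosTail (by simp [cosTail])
    (fun t => by rw [abs_mul, abs_neg, abs_two, pow_one]; linarith [abs_sin_two_mul_le t]) u

theorem abs_sinTail_le (u : ℝ) : |sinTail u| ≤ 8 * |u| ^ 3 :=
  abs_le_mul_abs_pow_succ_of_hasDerivAt hasDerivAt_sinTail (by simp [sinTail])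
    (fun t => by rw [abs_mul, abs_two]; linarith [abs_cosTail_le t]) u

theorem abs_deriv_cosTailEuler_le (u : ℝ) :
    |2 * sin (2 * u) - 4 * u * cos (2 * u)| ≤ 8 * |u| ^ 2 := by
  refine abs_le_mul_abs_pow_succ_of_hasDerivAt
    (f := fun t => 2 * sin (2 * t) - 4 * t * cos (2 * t)) (f' := fun t => 8 * t * sin (2 * t))
    (fun t => ?_) (by simp) (fun t => ?_) u
  · refine (((hasDerivAt_const_mul 2).sin.const_mul 2).sub
      (((hasDerivAt_id' t).const_mul 4).mul (hasDerivAt_const_mul 2).cos)).congr_deriv ?_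
    ring
  · simpa [abs_mul] using
      mul_le_of_le_one_right (by positivity : 0 ≤ 8 * |t|) (abs_sin_le_one (2 * t))

theorem abs_cosTailEuler_le (u : ℝ) : |cosTailEuler u| ≤ 8 * |u| ^ 3 :=
  abs_le_mul_abs_pow_succ_of_hasDerivAt hasDerivAt_cosTailEuler
    (by simp [cosTailEuler, cosTail]) abs_deriv_cosTailEuler_le u

theorem abs_sinTailEuler_le (u : ℝ) : |sinTailEuler u| ≤ 16 * |u| ^ 4 :=
  abs_le_mul_abs_pow_succ_of_hasDerivAt hasDerivAt_sinTailEuler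
    (by simp [sinTailEuler, cosTail, sinTail])
    (fun t => by rw [abs_mul, abs_two]; linarith [abs_cosTailEuler_le t]) u

section Derivatives

variable {ρ : ℝ} (hρ : ρ ≠ 0) (x : ℝ)
include hρ

theorem nlin_eq : nlin ρ x = -(3 / 2) *
    (sinCoeff ρ * (cosTail (ρ * x) / ρ ^ 2) + cosCoeff ρ * (sinTail (ρ * x) / ρ ^ 3)) := by
  rw [nlin, show 2 * ρ * x = 2 * (ρ * x) by ring, sin_add, sin_four_mul_arctan_div_sqrt_two,
    cos_four_mul_arctan_div_sqrt_two, cosTail, sinTail, cosCoeff]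
  field_simp
  ring

theorem hasDerivAt_nlin :
    HasDerivAt (nlin ρ) (-(3 / 2) * (sinCoeff ρ * (-2 * sin (2 * (ρ * x)) / ρ)
      + cosCoeff ρ * (2 * cosTail (ρ * x) / ρ ^ 2))) x := by
  rw [show nlin ρ = _ from funext (nlin_eq hρ)]
  have h₁ := hasDerivAt_comp_const_mul_div_pow_succ (hasDerivAt_cosTail (ρ * x)) hρ 1
  have h₂ := hasDerivAt_comp_const_mul_div_pow_succ (hasDerivAt_sinTail (ρ * x)) hρ 2
  simpa only [Nat.reduceAdd, pow_one] using
    ((h₁.const_mul (sinCoeff ρ)).fun_add (h₂.const_mul (cosCoeff ρ))).const_mul (-(3 / 2))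

theorem hasDerivAt_deriv_nlin :
    HasDerivAt (deriv (nlin ρ)) (-(3 / 2) * (sinCoeff ρ * (-4 * cos (2 * (ρ * x)))
      + cosCoeff ρ * (-4 * sin (2 * (ρ * x)) / ρ))) x := by
  rw [show deriv (nlin ρ) = _ from funext fun y => (hasDerivAt_nlin hρ y).deriv]
  have hsin : HasDerivAt (fun u => -2 * sin (2 * u)) (-4 * cos (2 * (ρ * x))) (ρ * x) :=
    ((hasDerivAt_const_mul 2).sin.const_mul (-2)).congr_deriv (by ring)
  have hcos : HasDerivAt (fun u => 2 * cosTail u) (-4 * sin (2 * (ρ * x))) (ρ * x) :=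
    ((hasDerivAt_cosTail _).const_mul 2).congr_deriv (by ring)
  have h₁ := hasDerivAt_comp_const_mul_div_pow_succ hsin hρ 0
  have h₂ := hasDerivAt_comp_const_mul_div_pow_succ hcos hρ 1
  simpa only [Nat.reduceAdd, pow_one, pow_zero, div_one] using
    ((h₁.const_mul (sinCoeff ρ)).fun_add (h₂.const_mul (cosCoeff ρ))).const_mul (-(3 / 2))

theorem hasDerivAt_nlin_radial :
    HasDerivAt (fun s => nlin s x)
      (-(3 / 2) * (deriv sinCoeff ρ * (cosTail (ρ * x) / ρ ^ 2)
          + sinCoeff ρ * (cosTailEuler (ρ * x) / ρ ^ 3)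
        + (deriv cosCoeff ρ * (sinTail (ρ * x) / ρ ^ 3)
          + cosCoeff ρ * (sinTailEuler (ρ * x) / ρ ^ 4)))) ρ := by
  have h₁ := hasDerivAt_comp_mul_const_div_pow (hasDerivAt_cosTail (ρ * x)) hρ 2
  have h₂ := hasDerivAt_comp_mul_const_div_pow (hasDerivAt_sinTail (ρ * x)) hρ 3
  have hS := (hasDerivAt_sinCoeff ρ).differentiableAt.hasDerivAt
  have hC := (hasDerivAt_cosCoeff ρ).differentiableAt.hasDerivAt
  refine ((((hS.mul h₁).fun_add (hC.mul h₂)).const_mul (-(3 / 2))).congr_deriv ?_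
    ).congr_of_eventuallyEq ?_
  · simp only [cosTailEuler, sinTailEuler, Nat.cast_ofNat]
  · filter_upwards [eventually_ne_nhds hρ] with s hs using nlin_eq hs x

theorem hasDerivAt_deriv_nlin_radial :
    HasDerivAt (fun y => deriv (fun s => nlin s y) ρ)
      (-(3 / 2) * (deriv sinCoeff ρ * (-2 * sin (2 * (ρ * x)) / ρ)
          + sinCoeff ρ * ((2 * sin (2 * (ρ * x)) - 4 * (ρ * x) * cos (2 * (ρ * x))) / ρ ^ 2)
        + (deriv cosCoeff ρ * (2 * cosTail (ρ * x) / ρ ^ 2)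
          + cosCoeff ρ * (2 * cosTailEuler (ρ * x) / ρ ^ 3)))) x := by
  rw [show (fun y => deriv (fun s => nlin s y) ρ) = _ from
    funext fun y => (hasDerivAt_nlin_radial hρ y).deriv]
  have h₁ := hasDerivAt_comp_const_mul_div_pow_succ (hasDerivAt_cosTail (ρ * x)) hρ 1
  have h₂ := hasDerivAt_comp_const_mul_div_pow_succ (hasDerivAt_cosTailEuler (ρ * x)) hρ 2
  have h₃ := hasDerivAt_comp_const_mul_div_pow_succ (hasDerivAt_sinTail (ρ * x)) hρ 2
  have h₄ := hasDerivAt_comp_const_mul_div_pow_succ (hasDerivAt_sinTailEuler (ρ * x)) hρ 3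
  simpa only [Nat.reduceAdd, pow_one] using
    (((h₁.const_mul (deriv sinCoeff ρ)).fun_add (h₂.const_mul (sinCoeff ρ))).fun_add
      ((h₃.const_mul (deriv cosCoeff ρ)).fun_add (h₄.const_mul (cosCoeff ρ)))).const_mul
      (-(3 / 2))

end Derivatives

section Bounds

variable {ρ : ℝ} (hρ : ρ ≠ 0) (x : ℝ)
include hρ

theorem abs_neg_two_mul_sin_div_le : |-2 * sin (2 * (ρ * x)) / ρ| ≤ 4 * |x| := by
  have h : |-2 * sin (2 * (ρ * x))| ≤ 4 * |ρ * x| ^ 1 := by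
    rw [abs_mul, abs_neg, abs_two, pow_one]
    linarith [abs_sin_two_mul_le (ρ * x)]
  simpa using abs_div_pow_le_of_abs_le h hρ

theorem abs_two_mul_cosTail_div_le : |2 * cosTail (ρ * x) / ρ ^ 2| ≤ 8 * |x| ^ 2 := by
  have h : |2 * cosTail (ρ * x)| ≤ 8 * |ρ * x| ^ 2 := by
    rw [abs_mul, abs_two]
    linarith [abs_cosTail_le (ρ * x)]
  exact abs_div_pow_le_of_abs_le h hρ

theorem abs_two_mul_cosTailEuler_div_le :
    |2 * cosTailEuler (ρ * x) / ρ ^ 3| ≤ 16 * |x| ^ 3 := by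
  have h : |2 * cosTailEuler (ρ * x)| ≤ 16 * |ρ * x| ^ 3 := by
    rw [abs_mul, abs_two]
    linarith [abs_cosTailEuler_le (ρ * x)]
  exact abs_div_pow_le_of_abs_le h hρ

theorem abs_nlin_le : |nlin ρ x| ≤ 200 * (x ^ 2 + |x| ^ 3) := by
  have h := abs_mul_add_mul_le (abs_sinCoeff_le ρ)
    (abs_div_pow_le_of_abs_le (abs_cosTail_le (ρ * x)) hρ) (abs_cosCoeff_le ρ)
    (abs_div_pow_le_of_abs_le (abs_sinTail_le (ρ * x)) hρ)
  rw [nlin_eq hρ x]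
  simp only [abs_mul, abs_neg, abs_div, Nat.abs_ofNat]
  nlinarith [abs_nonneg x, sq_abs x]

theorem abs_deriv_nlin_le : |deriv (fun y => nlin ρ y) x| ≤ 200 * (|x| + x ^ 2) := by
  have h := abs_mul_add_mul_le (abs_sinCoeff_le ρ) (abs_neg_two_mul_sin_div_le hρ x)
    (abs_cosCoeff_le ρ) (abs_two_mul_cosTail_div_le hρ x)
  rw [(hasDerivAt_nlin hρ x).deriv]
  simp only [abs_mul, abs_neg, abs_div, Nat.abs_ofNat]
  nlinarith [abs_nonneg x, sq_abs x]

theorem abs_iteratedDeriv_two_nlin_le :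
    |iteratedDeriv 2 (fun y => nlin ρ y) x| ≤ 200 * (1 + |x|) := by
  have hcos : |-4 * cos (2 * (ρ * x))| ≤ 4 := by
    rw [abs_mul, abs_neg, Nat.abs_ofNat]
    linarith [abs_cos_le_one (2 * (ρ * x))]
  have hsin : |-4 * sin (2 * (ρ * x)) / ρ| ≤ 8 * |x| := by
    have h : |-4 * sin (2 * (ρ * x))| ≤ 8 * |ρ * x| ^ 1 := by
      rw [abs_mul, abs_neg, Nat.abs_ofNat, pow_one]
      linarith [abs_sin_two_mul_le (ρ * x)]
    simpa using abs_div_pow_le_of_abs_le h hρ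
  have h := abs_mul_add_mul_le (abs_sinCoeff_le ρ) hcos (abs_cosCoeff_le ρ) hsin
  rw [iteratedDeriv_succ, iteratedDeriv_one, (hasDerivAt_deriv_nlin hρ x).deriv]
  simp only [abs_mul, abs_neg, abs_div, Nat.abs_ofNat]
  nlinarith [abs_nonneg x]

theorem abs_deriv_nlin_radial_le : |deriv (fun s => nlin s x) ρ| ≤ 200 * (x ^ 2 + x ^ 4) := by
  have hS := abs_mul_add_mul_le (abs_deriv_sinCoeff_le ρ)
    (abs_div_pow_le_of_abs_le (abs_cosTail_le (ρ * x)) hρ) (abs_sinCoeff_le ρ)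
    (abs_div_pow_le_of_abs_le (abs_cosTailEuler_le (ρ * x)) hρ)
  have hC := abs_mul_add_mul_le (abs_deriv_cosCoeff_le ρ)
    (abs_div_pow_le_of_abs_le (abs_sinTail_le (ρ * x)) hρ) (abs_cosCoeff_le ρ)
    (abs_div_pow_le_of_abs_le (abs_sinTailEuler_le (ρ * x)) hρ)
  have hx4 : |x| ^ 4 = x ^ 4 := Even.pow_abs ⟨2, rfl⟩ x
  rw [(hasDerivAt_nlin_radial hρ x).deriv]
  simp only [abs_mul, abs_neg, abs_div, Nat.abs_ofNat]
  refine (mul_le_mul_of_nonneg_left (abs_add_le _ _) (by norm_num)).trans ?_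
  nlinarith [sq_nonneg (|x| - |x| ^ 2), abs_nonneg x, sq_abs x]

theorem abs_deriv_deriv_nlin_radial_le :
    |deriv (fun y => deriv (fun s => nlin s y) ρ) x| ≤ 200 * (|x| + |x| ^ 3) := by
  have hS := abs_mul_add_mul_le (abs_deriv_sinCoeff_le ρ) (abs_neg_two_mul_sin_div_le hρ x)
    (abs_sinCoeff_le ρ) (abs_div_pow_le_of_abs_le (abs_deriv_cosTailEuler_le (ρ * x)) hρ)
  have hC := abs_mul_add_mul_le (abs_deriv_cosCoeff_le ρ) (abs_two_mul_cosTail_div_le hρ x)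
    (abs_cosCoeff_le ρ) (abs_two_mul_cosTailEuler_div_le hρ x)
  rw [(hasDerivAt_deriv_nlin_radial hρ x).deriv]
  simp only [abs_mul, abs_neg, abs_div, Nat.abs_ofNat]
  refine (mul_le_mul_of_nonneg_left (abs_add_le _ _) (by norm_num)).trans ?_
  nlinarith [sq_nonneg (|x| - |x| ^ 2), abs_nonneg x]

end Bounds

/-- Pointwise bounds on the linearized nonlinearity `n` and its first and
second partial derivatives, uniformly for `ρ ∈ (0,1)` and `x ∈ ℝ`. -/
theorem nonlinearity_pointwise_bounds :
    ∃ C > (0:ℝ), ∀ ρ ∈ Set.Ioo (0:ℝ) 1, ∀ x : ℝ,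
      |nlin ρ x| ≤ C * (x ^ 2 + |x| ^ 3)
      ∧ |deriv (fun y => nlin ρ y) x| ≤ C * (|x| + x ^ 2)
      ∧ |deriv (fun s => nlin s x) ρ| ≤ C * (x ^ 2 + x ^ 4)
      ∧ |deriv (fun y => deriv (fun s => nlin s y) ρ) x| ≤ C * (|x| + |x| ^ 3)
      ∧ |iteratedDeriv 2 (fun y => nlin ρ y) x| ≤ C * (1 + |x|) :=
  ⟨200, by norm_num, fun _ hρ x => ⟨abs_nlin_le hρ.1.ne' x, abs_deriv_nlin_le hρ.1.ne' x,
    abs_deriv_nlin_radial_le hρ.1.ne' x, abs_deriv_deriv_nlin_radial_le hρ.1.ne' x,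
    abs_iteratedDeriv_two_nlin_le hρ.1.ne' x⟩⟩
end
end
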